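/- Every element of the two-qubit CS-Dihedral group H (the submonoid of 4×4 complex matrices generated by {X₀, X₁, T₀, T₁, CS}; all generators have finite order, so H is a group) is phase-equivalent to a matrix of the form CS^e · X₀^k · X₁^{k'} · T₀^l · T₁^{l'} where k, k' ∈ {0,1}, l, l' ∈ {0,…,m−1}, and e ∈ {0,…,m/d−1}. -/

import Mathlib

open Matrix Kronecker

noncomputable section

/-- ω = exp(2πi/m). -/
def omega (m : ℕ) : ℂ := Complex.exp (2 * Real.pi * Complex.I / m)

/-- The bit-flip gate X = !![0,1;1,0]. -/
def Xg : Matrix (Fin 2) (Fin 2) ℂ := !![0, 1; 1, 0]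

/-- The phase gate T = !![1,0;0,ω]. -/
def Tg (m : ℕ) : Matrix (Fin 2) (Fin 2) ℂ := !![1, 0; 0, omega m]

/-- The inverse phase gate T⁻¹ = !![1,0;0,ω⁻¹]. -/
def Tginv (m : ℕ) : Matrix (Fin 2) (Fin 2) ℂ := !![1, 0; 0, (omega m)⁻¹]

/-- The Kronecker product of two 2×2 matrices, as a 4×4 matrix. -/
def kron (A B : Matrix (Fin 2) (Fin 2) ℂ) : Matrix (Fin 4) (Fin 4) ℂ :=
  Matrix.reindex finProdFinEquiv finProdFinEquiv (A ⊗ₖ B)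

/-- The controlled-X gate with control qubit 0 and target qubit 1. -/
def CX01 : Matrix (Fin 4) (Fin 4) ℂ :=
  !![1, 0, 0, 0; 0, 1, 0, 0; 0, 0, 0, 1; 0, 0, 1, 0]

/-- The controlled-X gate with control qubit 1 and target qubit 0. -/
def CX10 : Matrix (Fin 4) (Fin 4) ℂ :=
  !![1, 0, 0, 0; 0, 0, 0, 1; 0, 0, 1, 0; 0, 1, 0, 0]

/-- The controlled-S gate, the diagonal matrix with entries (1,1,1,ω²). -/
def CSg (m : ℕ) : Matrix (Fin 4) (Fin 4) ℂ :=
  Matrix.diagonal ![1, 1, 1, (omega m) ^ 2]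

/-- The inverse controlled-S gate, the diagonal matrix with entries (1,1,1,ω⁻²). -/
def CSginv (m : ℕ) : Matrix (Fin 4) (Fin 4) ℂ :=
  Matrix.diagonal ![1, 1, 1, ((omega m) ^ 2)⁻¹]
/-- X₀ = X ⊗ 1. -/
def X0 : Matrix (Fin 4) (Fin 4) ℂ := kron Xg 1

/-- X₁ = 1 ⊗ X. -/
def X1 : Matrix (Fin 4) (Fin 4) ℂ := kron 1 Xg

/-- T₀ = T ⊗ 1. -/
def T0 (m : ℕ) : Matrix (Fin 4) (Fin 4) ℂ := kron (Tg m) 1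

/-- T₁ = 1 ⊗ T. -/
def T1 (m : ℕ) : Matrix (Fin 4) (Fin 4) ℂ := kron 1 (Tg m)

/-- Two matrices are phase-equivalent if they differ by a nonzero scalar. -/
def PhaseEq {α : Type*} (U V : Matrix α α ℂ) : Prop := ∃ c : ℂ, c ≠ 0 ∧ U = c • V

/-! Up to a phase, every element of H has the form `CS^e · P · t`, where `P = X₀^k X₁^k'` and
`t` is a phase times `T₀^l T₁^l'`. These forms are stable under left multiplication by the
generators. The diagonal generators commute with `CS` and pass through `P`, since conjugation by
the involutions `X₀, X₁` maps phased `T`-words to phased `T`-words (`X₀ T₀ X₀ = ω T₀⁻¹`). An `X`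
passes through `CS^e` by `X₀ CS X₀ = CS⁻¹ T₁²` and `X₁ CS X₁ = CS⁻¹ T₀²`. Finally the exponents
are reduced modulo the orders `m / d, 2, 2, m, m` of `CS, X₀, X₁, T₀, T₁`. -/

section Monoid

variable {M : Type*} [Monoid M]

def conjInvolution (p : M) (hp : p * p = 1) : M →* M where
  toFun a := p * a * p
  map_one' := by rw [mul_one, hp]
  map_mul' a b := by
    rw [show p * a * p * (p * b * p) = p * a * (p * p) * b * p by simp only [mul_assoc], hp,
      mul_one, mul_assoc p a b]

@[simp]
lemma conjInvolution_apply (p : M) (hp : p * p = 1) (a : M) : conjInvolution p hp a = p * a * p :=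
  rfl

def semiNormalizer (S : Set M) : Submonoid M where
  carrier := {a | ∀ s ∈ S, ∃ s' ∈ S, s * a = a * s'}
  one_mem' s hs := ⟨s, hs, by rw [mul_one, one_mul]⟩
  mul_mem' {a b} ha hb s hs := by
    obtain ⟨s', hs', hsa⟩ := ha s hs
    obtain ⟨s'', hs'', hs'b⟩ := hb s' hs'
    exact ⟨s'', hs'', by rw [← mul_assoc, hsa, mul_assoc, hs'b, mul_assoc]⟩

lemma mem_semiNormalizer_of_mul_self {S : Set M} {p : M} (hp : p * p = 1)
    (hS : ∀ s ∈ S, p * s * p ∈ S) : p ∈ semiNormalizer S :=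
  fun s hs => ⟨p * s * p, hS s hs, by rw [← mul_assoc, ← mul_assoc, hp, one_mul]⟩

end Monoid

lemma X0_eq : X0 = !![0, 0, 1, 0; 0, 0, 0, 1; 1, 0, 0, 0; 0, 1, 0, 0] := by
  ext i j
  fin_cases i <;> fin_cases j <;>
    simp [X0, kron, Xg, finProdFinEquiv, one_apply, Fin.divNat, Fin.modNat]

lemma X1_eq : X1 = !![0, 1, 0, 0; 1, 0, 0, 0; 0, 0, 0, 1; 0, 0, 1, 0] := by
  ext i j
  fin_cases i <;> fin_cases j <;>
    simp [X1, kron, Xg, finProdFinEquiv, one_apply, Fin.divNat, Fin.modNat]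

lemma T0_eq (m : ℕ) : T0 m = diagonal ![1, 1, omega m, omega m] := by
  ext i j
  fin_cases i <;> fin_cases j <;>
    simp [T0, kron, Tg, finProdFinEquiv, one_apply, Fin.divNat, Fin.modNat]

lemma T1_eq (m : ℕ) : T1 m = diagonal ![1, omega m, 1, omega m] := by
  ext i j
  fin_cases i <;> fin_cases j <;>
    simp [T1, kron, Tg, finProdFinEquiv, one_apply, Fin.divNat, Fin.modNat]

lemma X0_mul_diagonal_mul_X0 (d : Fin 4 → ℂ) :
    X0 * diagonal d * X0 = diagonal ![d 2, d 3, d 0, d 1] := by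
  rw [X0_eq]
  ext i j
  fin_cases i <;> fin_cases j <;>
    simp [mul_apply, Fin.sum_univ_four, vecMul_diagonal]

lemma X1_mul_diagonal_mul_X1 (d : Fin 4 → ℂ) :
    X1 * diagonal d * X1 = diagonal ![d 1, d 0, d 3, d 2] := by
  rw [X1_eq]
  ext i j
  fin_cases i <;> fin_cases j <;>
    simp [mul_apply, Fin.sum_univ_four, vecMul_diagonal]

lemma X0_mul_X0 : X0 * X0 = 1 := by
  rw [X0_eq]
  ext i j
  fin_cases i <;> fin_cases j <;>
    simp [mul_apply, Fin.sum_univ_four, one_apply]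

lemma X1_mul_X1 : X1 * X1 = 1 := by
  rw [X1_eq]
  ext i j
  fin_cases i <;> fin_cases j <;>
    simp [mul_apply, Fin.sum_univ_four, one_apply]

lemma commute_X0_X1 : Commute X0 X1 := by
  rw [Commute, SemiconjBy, X0_eq, X1_eq]
  ext i j
  fin_cases i <;> fin_cases j <;>
    simp [mul_apply, Fin.sum_univ_four]

lemma omega_ne_zero (m : ℕ) : omega m ≠ 0 := Complex.exp_ne_zero _

lemma omega_pow_self {m : ℕ} (hm : 0 < m) : omega m ^ m = 1 :=
  (Complex.isPrimitiveRoot_exp m hm.ne').pow_eq_one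

lemma omega_pow_mul_sub_one_mul_pow {m : ℕ} (hm : 0 < m) (n : ℕ) :
    omega m ^ (n * (m - 1)) * omega m ^ n = 1 := by
  rw [← pow_add, ← mul_add_one, Nat.sub_one_add_one hm.ne', pow_mul', omega_pow_self hm, one_pow]

lemma X0_conj_T0 {m : ℕ} (hm : 0 < m) : X0 * T0 m * X0 = omega m • T0 m ^ (m - 1) := by
  rw [T0_eq, X0_mul_diagonal_mul_X0, diagonal_pow, ← diagonal_smul]
  congr 1
  funext i
  fin_cases i <;> simp [← pow_succ', Nat.sub_add_cancel hm, omega_pow_self hm]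

lemma X1_conj_T1 {m : ℕ} (hm : 0 < m) : X1 * T1 m * X1 = omega m • T1 m ^ (m - 1) := by
  rw [T1_eq, X1_mul_diagonal_mul_X1, diagonal_pow, ← diagonal_smul]
  congr 1
  funext i
  fin_cases i <;> simp [← pow_succ', Nat.sub_add_cancel hm, omega_pow_self hm]

lemma X0_conj_T1 (m : ℕ) : X0 * T1 m * X0 = T1 m := by
  rw [T1_eq, X0_mul_diagonal_mul_X0]
  rfl

lemma X1_conj_T0 (m : ℕ) : X1 * T0 m * X1 = T0 m := by
  rw [T0_eq, X1_mul_diagonal_mul_X1]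
  rfl

lemma X0_conj_CS {m : ℕ} (hm : 0 < m) : X0 * CSg m * X0 = CSg m ^ (m - 1) * T1 m ^ 2 := by
  rw [CSg, T1_eq, X0_mul_diagonal_mul_X0, diagonal_pow, diagonal_pow, diagonal_mul_diagonal]
  congr 1
  funext i
  fin_cases i <;> simp [← pow_mul, omega_pow_mul_sub_one_mul_pow hm 2]

lemma X1_conj_CS {m : ℕ} (hm : 0 < m) : X1 * CSg m * X1 = CSg m ^ (m - 1) * T0 m ^ 2 := by
  rw [CSg, T0_eq, X1_mul_diagonal_mul_X1, diagonal_pow, diagonal_pow, diagonal_mul_diagonal]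
  congr 1
  funext i
  fin_cases i <;> simp [← pow_mul, omega_pow_mul_sub_one_mul_pow hm 2]

lemma T0_pow_self {m : ℕ} (hm : 0 < m) : T0 m ^ m = 1 := by
  rw [T0_eq, diagonal_pow, ← diagonal_one]
  congr 1
  funext i
  fin_cases i <;> simp [omega_pow_self hm]

lemma T1_pow_self {m : ℕ} (hm : 0 < m) : T1 m ^ m = 1 := by
  rw [T1_eq, diagonal_pow, ← diagonal_one]
  congr 1
  funext i
  fin_cases i <;> simp [omega_pow_self hm]

lemma CSg_pow_div_gcd {m : ℕ} (hm : 0 < m) : CSg m ^ (m / m.gcd 2) = 1 := by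
  have h : (omega m ^ 2) ^ (m / m.gcd 2) = 1 := by
    rw [← pow_mul, ← Nat.mul_div_assoc 2 (Nat.gcd_dvd_left m 2), Nat.mul_comm,
      Nat.mul_div_assoc m (Nat.gcd_dvd_right m 2), pow_mul, omega_pow_self hm, one_pow]
  rw [CSg, diagonal_pow, ← diagonal_one]
  congr 1
  funext i
  fin_cases i <;> simp [h]

lemma commute_T0_T1 (m : ℕ) : Commute (T0 m) (T1 m) := by
  rw [T0_eq, T1_eq]
  exact commute_diagonal _ _

lemma commute_CSg_T0 (m : ℕ) : Commute (CSg m) (T0 m) := by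
  rw [CSg, T0_eq]
  exact commute_diagonal _ _

lemma commute_CSg_T1 (m : ℕ) : Commute (CSg m) (T1 m) := by
  rw [CSg, T1_eq]
  exact commute_diagonal _ _


def phasedTorus (m : ℕ) : Submonoid (Matrix (Fin 4) (Fin 4) ℂ) where
  carrier := {t | ∃ c : ℂ, c ≠ 0 ∧ ∃ l l' : ℕ, t = c • (T0 m ^ l * T1 m ^ l')}
  one_mem' := ⟨1, one_ne_zero, 0, 0, by simp⟩
  mul_mem' := by
    rintro _ _ ⟨c, hc, l, l', rfl⟩ ⟨d, hd, n, n', rfl⟩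
    refine ⟨c * d, mul_ne_zero hc hd, l + n, l' + n', ?_⟩
    rw [smul_mul_smul_comm, ((commute_T0_T1 m).pow_pow n l').symm.mul_mul_mul_comm, pow_add,
      pow_add]

namespace phasedTorus

variable {m : ℕ}

lemma T0_mem : T0 m ∈ phasedTorus m := ⟨1, one_ne_zero, 1, 0, by simp⟩

lemma T1_mem : T1 m ∈ phasedTorus m := ⟨1, one_ne_zero, 0, 1, by simp⟩

lemma commute_CSg {t : Matrix (Fin 4) (Fin 4) ℂ} (ht : t ∈ phasedTorus m) : Commute (CSg m) t := by
  obtain ⟨c, -, l, l', rfl⟩ := ht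
  exact (((commute_CSg_T0 m).pow_right l).mul_right ((commute_CSg_T1 m).pow_right l')).smul_right c

lemma X0_mem_semiNormalizer (hm : 0 < m) : X0 ∈ semiNormalizer (phasedTorus m : Set _) := by
  refine mem_semiNormalizer_of_mul_self X0_mul_X0 ?_
  rintro _ ⟨c, hc, l, l', rfl⟩
  refine ⟨c * omega m ^ l, mul_ne_zero hc (pow_ne_zero _ (omega_ne_zero m)),
    (m - 1) * l, l', ?_⟩
  have h := map_mul (conjInvolution X0 X0_mul_X0) (T0 m ^ l) (T1 m ^ l')
  simp only [map_pow, conjInvolution_apply, X0_conj_T0 hm, X0_conj_T1] at h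
  rw [mul_smul_comm, smul_mul_assoc, h, smul_pow, smul_mul_assoc, smul_smul, pow_mul]

lemma X1_mem_semiNormalizer (hm : 0 < m) : X1 ∈ semiNormalizer (phasedTorus m : Set _) := by
  refine mem_semiNormalizer_of_mul_self X1_mul_X1 ?_
  rintro _ ⟨c, hc, l, l', rfl⟩
  refine ⟨c * omega m ^ l', mul_ne_zero hc (pow_ne_zero _ (omega_ne_zero m)),
    l, (m - 1) * l', ?_⟩
  have h := map_mul (conjInvolution X1 X1_mul_X1) (T0 m ^ l) (T1 m ^ l')
  simp only [map_pow, conjInvolution_apply, X1_conj_T0, X1_conj_T1 hm] at h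
  rw [mul_smul_comm, smul_mul_assoc, h, smul_pow, mul_smul_comm, smul_smul, pow_mul]

end phasedTorus

lemma X0_conj_CSg_pow {m : ℕ} (hm : 0 < m) (e : ℕ) :
    X0 * CSg m ^ e * X0 = CSg m ^ ((m - 1) * e) * T1 m ^ (2 * e) := by
  have h := map_pow (conjInvolution X0 X0_mul_X0) (CSg m) e
  simp only [conjInvolution_apply, X0_conj_CS hm] at h
  rw [h, ((commute_CSg_T1 m).pow_pow _ _).mul_pow, pow_mul, pow_mul]

lemma X1_conj_CSg_pow {m : ℕ} (hm : 0 < m) (e : ℕ) :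
    X1 * CSg m ^ e * X1 = CSg m ^ ((m - 1) * e) * T0 m ^ (2 * e) := by
  have h := map_pow (conjInvolution X1 X1_mul_X1) (CSg m) e
  simp only [conjInvolution_apply, X1_conj_CS hm] at h
  rw [h, ((commute_CSg_T0 m).pow_pow _ _).mul_pow, pow_mul, pow_mul]

def normalForms (m : ℕ) : Set (Matrix (Fin 4) (Fin 4) ℂ) :=
  {U | ∃ e k k' : ℕ, ∃ t ∈ phasedTorus m, U = CSg m ^ e * X0 ^ k * X1 ^ k' * t}

namespace normalForms

variable {m : ℕ} {U : Matrix (Fin 4) (Fin 4) ℂ}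

lemma one_mem : 1 ∈ normalForms m := ⟨0, 0, 0, 1, Submonoid.one_mem _, by simp⟩

lemma CSg_pow_mul_torus_mul_mem (hm : 0 < m) {s t : Matrix (Fin 4) (Fin 4) ℂ}
    (hs : s ∈ phasedTorus m) (ht : t ∈ phasedTorus m) (e k k' : ℕ) :
    CSg m ^ e * (s * (X0 ^ k * X1 ^ k')) * t ∈ normalForms m := by
  have hP : X0 ^ k * X1 ^ k' ∈ semiNormalizer (phasedTorus m : Set _) :=
    mul_mem (pow_mem (phasedTorus.X0_mem_semiNormalizer hm) k)
      (pow_mem (phasedTorus.X1_mem_semiNormalizer hm) k')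
  obtain ⟨s', hs', hsP⟩ := hP s hs
  exact ⟨e, k, k', s' * t, mul_mem hs' ht, by rw [hsP]; simp only [mul_assoc]⟩

lemma torus_mul_mem (hm : 0 < m) {s : Matrix (Fin 4) (Fin 4) ℂ} (hs : s ∈ phasedTorus m)
    (hU : U ∈ normalForms m) : s * U ∈ normalForms m := by
  obtain ⟨e, k, k', t, ht, rfl⟩ := hU
  convert CSg_pow_mul_torus_mul_mem hm hs ht e k k' using 1
  rw [← mul_assoc, ← mul_assoc, ← mul_assoc, ← ((phasedTorus.commute_CSg hs).pow_left e).eq]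
  simp only [mul_assoc]

lemma CSg_mul_mem (hU : U ∈ normalForms m) : CSg m * U ∈ normalForms m := by
  obtain ⟨e, k, k', t, ht, rfl⟩ := hU
  exact ⟨e + 1, k, k', t, ht, by simp only [pow_succ', mul_assoc]⟩

lemma X0_mul_mem (hm : 0 < m) (hU : U ∈ normalForms m) : X0 * U ∈ normalForms m := by
  obtain ⟨e, k, k', t, ht, rfl⟩ := hU
  convert CSg_pow_mul_torus_mul_mem hm (pow_mem phasedTorus.T1_mem (2 * e)) ht ((m - 1) * e)
    (k + 1) k' using 1
  rw [← mul_assoc (CSg m ^ _), ← X0_conj_CSg_pow hm, pow_succ']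
  simp only [mul_assoc]
  rw [← mul_assoc X0 X0, X0_mul_X0, one_mul]

lemma X1_mul_mem (hm : 0 < m) (hU : U ∈ normalForms m) : X1 * U ∈ normalForms m := by
  obtain ⟨e, k, k', t, ht, rfl⟩ := hU
  convert CSg_pow_mul_torus_mul_mem hm (pow_mem phasedTorus.T0_mem (2 * e)) ht ((m - 1) * e)
    k (k' + 1) using 1
  rw [← mul_assoc (CSg m ^ _), ← X1_conj_CSg_pow hm, pow_succ', ← mul_assoc (X0 ^ k),
    (commute_X0_X1.pow_left k).eq]
  simp only [mul_assoc]
  rw [← mul_assoc X1 X1, X1_mul_X1, one_mul]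

lemma closure_subset (hm : 0 < m) :
    (Submonoid.closure {X0, X1, T0 m, T1 m, CSg m} : Set _) ⊆ normalForms m := by
  intro U hU
  induction hU using Submonoid.closure_induction_left with
  | one => exact one_mem
  | mul_left x hx U _ ih =>
    rcases hx with rfl | rfl | rfl | rfl | rfl
    · exact X0_mul_mem hm ih
    · exact X1_mul_mem hm ih
    · exact torus_mul_mem hm phasedTorus.T0_mem ih
    · exact torus_mul_mem hm phasedTorus.T1_mem ih
    · exact CSg_mul_mem ih

end normalForms

theorem CS_dihedral_canonical_form (m : ℕ) (hm : 0 < m) :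
    ∀ U ∈ Submonoid.closure ({X0, X1, T0 m, T1 m, CSg m} :
        Set (Matrix (Fin 4) (Fin 4) ℂ)),
      ∃ e k k' l l' : ℕ, e < m / Nat.gcd m 2 ∧ k < 2 ∧ k' < 2 ∧ l < m ∧ l' < m ∧
        PhaseEq U (CSg m ^ e * X0 ^ k * X1 ^ k' * T0 m ^ l * T1 m ^ l') := by
  intro U hU
  obtain ⟨e, k, k', _, ⟨c, hc, l, l', rfl⟩, rfl⟩ := normalForms.closure_subset hm hU
  have hM : 0 < m / m.gcd 2 := Nat.div_pos (Nat.gcd_le_left 2 hm) (Nat.gcd_pos_of_pos_left 2 hm)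
  refine ⟨e % (m / m.gcd 2), k % 2, k' % 2, l % m, l' % m, Nat.mod_lt _ hM, Nat.mod_lt _ two_pos,
    Nat.mod_lt _ two_pos, Nat.mod_lt _ hm, Nat.mod_lt _ hm, c, hc, ?_⟩
  rw [← pow_eq_pow_mod e (CSg_pow_div_gcd hm), ← pow_eq_pow_mod k ((sq X0).trans X0_mul_X0),
    ← pow_eq_pow_mod k' ((sq X1).trans X1_mul_X1), ← pow_eq_pow_mod l (T0_pow_self hm),
    ← pow_eq_pow_mod l' (T1_pow_self hm), mul_smul_comm]
  simp only [mul_assoc]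

end
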